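/- For the 4×2 rate-3/2 code X with rows (a, -conj(b)), (b, conj(a)), (σ(a), -conj(b)), (b, conj(σ(a))), where a ∈ ℤ[ζ₈], b ∈ ℤ[i], not both zero, and σ: ζ₈ ↦ -ζ₈, the matrix Xᴴ X is invertible (the code is fully diverse). -/

import Mathlib

/-!
Each Alamouti block `A = !![a, -b̄; b, ā]` is a scaled unitary, `Aᴴ A = (|a|² + |b|²) • 1`.
Stacking two of them sums these Gram matrices, so `Xᴴ X = (|a|² + |σ a|² + 2|b|²) • 1`,
a nonzero scalar matrix as soon as `a` and `b` do not both vanish.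
-/

open Complex Matrix

namespace Matrix

variable {R : Type*}

def alamouti [Star R] [Neg R] (a b : R) : Matrix (Fin 2) (Fin 2) R :=
  !![a, -star b; b, star a]

theorem alamouti_conjTranspose_mul_self [CommRing R] [StarRing R] (a b : R) :
    (alamouti a b)ᴴ * alamouti a b = (star a * a + star b * b) • (1 : Matrix (Fin 2) (Fin 2) R) := by
  ext i j
  fin_cases i <;> fin_cases j <;> simp [alamouti, mul_apply, Fin.sum_univ_two] <;> ring

theorem conjTranspose_fromRows_mul_self {m₁ m₂ n : Type*} [Fintype m₁] [Fintype m₂]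
    [Semiring R] [StarRing R] (A : Matrix m₁ n R) (B : Matrix m₂ n R) :
    (fromRows A B)ᴴ * fromRows A B = Aᴴ * A + Bᴴ * B := by
  rw [conjTranspose_fromRows_eq_fromCols_conjTranspose, fromCols_mul_fromRows]

theorem conjTranspose_mul_self_submatrix_equiv {m m' n : Type*} [Fintype m] [Fintype m']
    [NonUnitalNonAssocSemiring R] [StarRing R] (A : Matrix m n R) (e : m' ≃ m) :
    (A.submatrix e id)ᴴ * A.submatrix e id = Aᴴ * A := by
  rw [conjTranspose_submatrix, submatrix_mul_equiv _ _ _ e, submatrix_id_id]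

end Matrix

theorem star_mul_self_add_star_mul_self_pos {R : Type*} [CommRing R] [IsDomain R]
    [PartialOrder R] [StarRing R] [StarOrderedRing R] {a b : R} (h : ¬(a = 0 ∧ b = 0)) :
    0 < star a * a + star b * b := by
  by_cases ha : a = 0
  · have hb : b ≠ 0 := fun hb => h ⟨ha, hb⟩
    exact add_pos_of_nonneg_of_pos (star_mul_self_nonneg a)
      (star_mul_self_pos (IsRegular.of_ne_zero hb))
  · exact add_pos_of_pos_of_nonneg (star_mul_self_pos (IsRegular.of_ne_zero ha))
      (star_mul_self_nonneg b)

open scoped ComplexOrder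

theorem rate_three_halves_fully_diverse (k₀ k₁ k₂ k₃ : ℤ) (b : GaussianInt)
    (h : ¬((k₀ : ℂ) + k₁ * Complex.exp (2 * Real.pi * Complex.I / 8)
        + k₂ * Complex.exp (2 * Real.pi * Complex.I / 8)^2
        + k₃ * Complex.exp (2 * Real.pi * Complex.I / 8)^3 = 0 ∧ b = 0)) :
    let ζ : ℂ := Complex.exp (2 * Real.pi * Complex.I / 8)
    let a : ℂ := k₀ + k₁ * ζ + k₂ * ζ^2 + k₃ * ζ^3
    let sa : ℂ := k₀ - k₁ * ζ + k₂ * ζ^2 - k₃ * ζ^3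
    let X : Matrix (Fin 4) (Fin 2) ℂ :=
      !![a, -(starRingEnd ℂ) (b : ℂ);
         (b : ℂ), (starRingEnd ℂ) a;
         sa, -(starRingEnd ℂ) (b : ℂ);
         (b : ℂ), (starRingEnd ℂ) sa]
    IsUnit (Xᴴ * X) := by
  intro ζ a sa X
  have hX : X = (fromRows (alamouti a (b : ℂ)) (alamouti sa (b : ℂ))).submatrix
      finSumFinEquiv.symm id := by
    ext i j
    fin_cases i <;> fin_cases j <;> rfl
  have hab : 0 < star a * a + star (b : ℂ) * b :=
    star_mul_self_add_star_mul_self_pos (by rwa [GaussianInt.toComplex_eq_zero])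
  have hsab : 0 ≤ star sa * sa + star (b : ℂ) * b :=
    add_nonneg (star_mul_self_nonneg sa) (star_mul_self_nonneg _)
  rw [hX, conjTranspose_mul_self_submatrix_equiv, conjTranspose_fromRows_mul_self,
    alamouti_conjTranspose_mul_self, alamouti_conjTranspose_mul_self, ← add_smul]
  exact isUnit_one.smul (Units.mk0 _ (add_pos_of_pos_of_nonneg hab hsab).ne')
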